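/- (Semilattice property) Fix a star-forest G on the set of destination types. Let Λ_G be the set of size vectors λ ∈ ℤ_{>0}^t such that G together with λ determines an envy-free feasible allocation. Then Λ_G is closed under componentwise maximum: λ, λ' ∈ Λ_G implies λ ∨ λ' ∈ Λ_G; i.e., Λ_G is an upper semilattice. -/

import Mathlib

open Finset MeasureTheory ENNReal

/-- Number of agents in coalition `T` whose destination is at least `r`. -/
noncomputable def nT (xd : ℕ → ℝ) (T : Finset ℕ) (r : ℝ) : ℕ := (T.filter fun a => r ≤ xd a).card

/-- Shapley cost share of a passenger dropping at `y` in coalition `T`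
(`∞` when `n_T` vanishes on part of `(0,y]`). -/
noncomputable def phi (xd : ℕ → ℝ) (T : Finset ℕ) (y : ℝ) : ℝ≥0∞ :=
  ∫⁻ r in Set.Ioc (0:ℝ) y, (nT xd T r : ℝ≥0∞)⁻¹

/-- Cost share including the capacity constraint of the taxi. -/
noncomputable def taxiCost (xd : ℕ → ℝ) (q : ℕ) (T : Finset ℕ) (y : ℝ) : ℝ≥0∞ :=
  if T.card ≤ q then phi xd T y else ⊤

/-- `Tl` is a partition of the agent set `A` into the (possibly empty) coalitions
of the `k` taxis. -/
def IsPartition (A : Finset ℕ) {k : ℕ} (Tl : Fin k → Finset ℕ) : Prop :=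
  (∀ i j, i ≠ j → Disjoint (Tl i) (Tl j)) ∧ Finset.univ.biUnion Tl = A

/-- Feasibility: each coalition respects the capacity of its taxi. -/
def Feasible {k : ℕ} (q : Fin k → ℕ) (Tl : Fin k → Finset ℕ) : Prop :=
  ∀ i, (Tl i).card ≤ q i

/-- Envy-freeness: no agent `a` can lower her cost by replacing an agent `b`
of another taxi. -/
def EnvyFree (xd : ℕ → ℝ) {k : ℕ} (q : Fin k → ℕ) (Tl : Fin k → Finset ℕ) : Prop :=
  ∀ i j, i ≠ j → ∀ a ∈ Tl i, ∀ b ∈ Tl j,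
    taxiCost xd (q i) (Tl i) (xd a) ≤ taxiCost xd (q j) ((Tl j).erase b ∪ {a}) (xd a)

/-- A star-forest: all edges go from a smaller to a larger type, every vertex has
in-degree at most one, and every non-root vertex (i.e. a vertex with an incoming
edge) has out-degree at most one. -/
noncomputable def IsStarForest (E : Finset (ℝ × ℝ)) : Prop :=
  (∀ e ∈ E, e.1 < e.2) ∧
  (∀ z : ℝ, (E.filter fun e => e.2 = z).card ≤ 1) ∧
  (∀ y : ℝ, (∃ e ∈ E, e.2 = y) → (E.filter fun e => e.1 = y).card ≤ 1)

/-- `E` is the allocation graph `G^𝒯` of the allocation `Tl`: `(y,z)` is an edge iff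
in some coalition an agent of type `z` drops off immediately after one of type `y`. -/
def AllocGraphEq (xd : ℕ → ℝ) {k : ℕ} (Tl : Fin k → Finset ℕ)
    (E : Finset (ℝ × ℝ)) : Prop :=
  ∀ y z : ℝ, (y, z) ∈ E ↔
    ∃ i, (∃ a ∈ Tl i, xd a = y) ∧ (∃ a ∈ Tl i, xd a = z) ∧ y < z ∧
      ¬ ∃ a ∈ Tl i, y < xd a ∧ xd a < z

/-- `lam` is the size vector of `Tl` with respect to the components `C`: every
nonempty coalition whose types meet component `C j` has size `lam j`. -/
def SizeVecEq (xd : ℕ → ℝ) {k t : ℕ} (Tl : Fin k → Finset ℕ)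
    (C : Fin t → Finset ℝ) (lam : Fin t → ℕ) : Prop :=
  ∀ j : Fin t, ∀ i : Fin k, (Tl i).Nonempty →
    (∃ a ∈ Tl i, xd a ∈ C j) → (Tl i).card = lam j

/-- `lam ∈ Λ_G`: some envy-free feasible allocation realizes the star-forest `E`
with size vector `lam` (w.r.t. the components `C`). -/
def MemLambdaG (A : Finset ℕ) (xd : ℕ → ℝ) {k t : ℕ} (q : Fin k → ℕ)
    (E : Finset (ℝ × ℝ)) (C : Fin t → Finset ℝ) (lam : Fin t → ℕ) : Prop :=
  ∃ Tl : Fin k → Finset ℕ,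
    IsPartition A Tl ∧ Feasible q Tl ∧ EnvyFree xd q Tl ∧
    AllocGraphEq xd Tl E ∧ SizeVecEq xd Tl C lam

/-!
Envy-freeness pins down the coalitions of a realization of a star-forest `E` almost completely.
Agents of a non-root type ride together with an agent of the preceding type (otherwise they
would envy that seat), so above the root of its component a coalition is the whole branch of
the star through it, independently of the realization; an agent's cost share therefore depends
on the realization only through `λ_j`, and decreases with it. An agent at the root `ρ_j` pays
`ρ_j / λ_j`, so envy-freeness also forces `λ_j` to decrease as the root `ρ_j` increases.

Given realizations with sizes `λ` and `λ'`, take in each component the coalitions of the one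
with the larger size. Nobody envies anybody in this family: each agent pays at most what she
pays in the realization whose seat she would take. Monotonicity in the roots shows that, for
every `c`, one of the two realizations has at least as many coalitions of size `≥ c` as the
mixed family, so Hall's theorem places the mixed family into the taxis.
-/

section CostShare

variable {xd : ℕ → ℝ}

lemma one_le_nT {T : Finset ℕ} {r : ℝ} {a : ℕ} (ha : a ∈ T) (hr : r ≤ xd a) : 1 ≤ nT xd T r :=
  card_pos.mpr ⟨a, mem_filter.mpr ⟨ha, hr⟩⟩

lemma nT_eq_card {T : Finset ℕ} {r : ℝ} (h : ∀ c ∈ T, r ≤ xd c) : nT xd T r = T.card := by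
  rw [nT, filter_true_of_mem h]

lemma nT_antitone (T : Finset ℕ) : Antitone (nT xd T) := fun _ _ hrs =>
  card_le_card (monotone_filter_right _ fun _ _ h => hrs.trans h)

lemma nT_erase_union_singleton {S : Finset ℕ} {a b : ℕ} (ha : a ∉ S) (hb : b ∈ S) (r : ℝ) :
    nT xd (S.erase b ∪ {a}) r + (if r ≤ xd b then 1 else 0)
      = nT xd S r + (if r ≤ xd a then 1 else 0) := by
  rw [nT, nT, card_filter, card_filter, union_singleton,
    sum_insert fun h => ha (mem_of_mem_erase h), ← add_sum_erase S _ hb]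
  ring

lemma card_erase_union_singleton {S : Finset ℕ} {a b : ℕ} (ha : a ∉ S) (hb : b ∈ S) :
    (S.erase b ∪ {a}).card = S.card := by
  rw [union_singleton, card_insert_of_notMem fun h => ha (mem_of_mem_erase h),
    card_erase_add_one hb]

lemma measurable_inv_nT (T : Finset ℕ) : Measurable fun r => (nT xd T r : ℝ≥0∞)⁻¹ :=
  Monotone.measurable fun _ _ hrs => ENNReal.inv_le_inv.mpr (by exact_mod_cast nT_antitone T hrs)

lemma phi_mono {S T : Finset ℕ} {y : ℝ} (h : ∀ r ∈ Set.Ioc 0 y, nT xd T r ≤ nT xd S r) :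
    phi xd S y ≤ phi xd T y :=
  setLIntegral_mono' measurableSet_Ioc fun r hr =>
    ENNReal.inv_le_inv.mpr (by exact_mod_cast h r hr)

lemma phi_congr {S T : Finset ℕ} (h : ∀ r, nT xd S r = nT xd T r) (y : ℝ) :
    phi xd S y = phi xd T y := by
  simp only [phi, h]

lemma phi_eq_of_nT_eq {T : Finset ℕ} {m : ℕ} {y : ℝ}
    (h : ∀ r ∈ Set.Ioc 0 y, nT xd T r = m) :
    phi xd T y = (m : ℝ≥0∞)⁻¹ * ENNReal.ofReal y := by
  rw [phi, setLIntegral_congr_fun measurableSet_Ioc (fun r hr => by rw [h r hr]),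
    setLIntegral_const, Real.volume_Ioc, sub_zero]

lemma setLIntegral_inv_nT_ne_top {T : Finset ℕ} {a b : ℝ}
    (h : ∀ r ∈ Set.Ioc a b, 1 ≤ nT xd T r) :
    ∫⁻ r in Set.Ioc a b, (nT xd T r : ℝ≥0∞)⁻¹ ≠ ⊤ := by
  refine ne_top_of_le_ne_top ?_ (setLIntegral_mono' (g := fun _ => 1) measurableSet_Ioc
    fun r hr => ENNReal.inv_le_one.mpr (by exact_mod_cast h r hr))
  rw [setLIntegral_const, one_mul]
  exact measure_Ioc_lt_top.ne

lemma phi_lt_phi {U V : Finset ℕ} {p w : ℝ} (hp : 0 ≤ p) (hpw : p < w)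
    (hU : ∀ r ∈ Set.Ioc 0 p, 1 ≤ nT xd U r)
    (hlow : ∀ r ∈ Set.Ioc 0 p, nT xd V r = nT xd U r)
    (hhigh : ∀ r ∈ Set.Ioc p w, nT xd V r = nT xd U r + 1) :
    phi xd V w < phi xd U w := by
  have hsplit : ∀ T : Finset ℕ, phi xd T w = (∫⁻ r in Set.Ioc 0 p, (nT xd T r : ℝ≥0∞)⁻¹)
      + ∫⁻ r in Set.Ioc p w, (nT xd T r : ℝ≥0∞)⁻¹ := fun T => by
    rw [phi, ← Set.Ioc_union_Ioc_eq_Ioc hp hpw.le,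
      lintegral_union measurableSet_Ioc (Set.Ioc_disjoint_Ioc_of_le le_rfl)]
  rw [hsplit, hsplit, setLIntegral_congr_fun measurableSet_Ioc (fun r hr => by rw [hlow r hr])]
  refine ENNReal.add_lt_add_left (setLIntegral_inv_nT_ne_top hU) ?_
  refine setLIntegral_strict_mono measurableSet_Ioc (by simp [hpw]) (measurable_inv_nT U)
    (setLIntegral_inv_nT_ne_top fun r hr => by rw [hhigh r hr]; omega) (ae_of_all _ fun r hr => ?_)
  rw [hhigh r hr, Nat.cast_add, Nat.cast_one]
  exact ENNReal.inv_lt_inv.mpr (ENNReal.lt_add_right (by simp) one_ne_zero)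

end CostShare

theorem Relator.LeftUnique.reflTransGen_of_symm {α : Type*} {r : α → α → Prop}
    (hr : Relator.LeftUnique r) {a b : α} (ha : ∀ x, ¬ r x a)
    (h : Relation.ReflTransGen (fun u v => r u v ∨ r v u) a b) : Relation.ReflTransGen r a b := by
  induction h with
  | refl => rfl
  | tail _ hcb ih =>
    rcases hcb with hcb | hbc
    · exact ih.tail hcb
    · rcases ih.cases_tail with rfl | ⟨d, had, hdc⟩
      · exact absurd hbc (ha _)
      · rwa [hr hbc hdc]

lemma exists_edge_of_mem_of_ne_min' {E : Finset (ℝ × ℝ)} {t : ℕ} {C : Fin t → Finset ℝ}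
    (hstar : IsStarForest E) (hCedge : ∀ e ∈ E, ∀ j : Fin t, e.1 ∈ C j ↔ e.2 ∈ C j)
    (hCconn : ∀ j : Fin t, ∀ y ∈ C j, ∀ z ∈ C j,
      Relation.ReflTransGen (fun u v : ℝ => (u, v) ∈ E ∨ (v, u) ∈ E) y z)
    {j : Fin t} (hj : (C j).Nonempty) {v : ℝ} (hv : v ∈ C j) (hne : v ≠ (C j).min' hj) :
    ∃ p, (p, v) ∈ E := by
  have hunique : Relator.LeftUnique fun u v : ℝ => (u, v) ∈ E := fun x y z hx hy =>
    congrArg Prod.fst (card_le_one.mp (hstar.2.1 z) _ (mem_filter.mpr ⟨hx, rfl⟩) _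
      (mem_filter.mpr ⟨hy, rfl⟩))
  have hroot : ∀ x, (x, (C j).min' hj) ∉ E := fun x hx =>
    (hstar.1 _ hx).not_ge (min'_le _ _ ((hCedge _ hx j).mpr (min'_mem _ hj)))
  rcases (hunique.reflTransGen_of_symm hroot
    (hCconn j _ (min'_mem _ hj) v hv)).cases_tail with h | ⟨p, -, hp⟩
  · exact absurd h hne
  · exact ⟨p, hp⟩

namespace IsPartition

variable {A : Finset ℕ} {k : ℕ} {Tl : Fin k → Finset ℕ}

lemma subset (hP : IsPartition A Tl) (i : Fin k) : Tl i ⊆ A := by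
  rw [← hP.2]
  exact subset_biUnion_of_mem Tl (mem_univ i)

lemma exists_mem (hP : IsPartition A Tl) {a : ℕ} (ha : a ∈ A) : ∃ i, a ∈ Tl i := by
  rw [← hP.2] at ha
  simpa using ha

lemma eq_of_mem (hP : IsPartition A Tl) {a : ℕ} {i i' : Fin k} (h : a ∈ Tl i) (h' : a ∈ Tl i') :
    i = i' := by
  by_contra hne
  exact disjoint_left.mp (hP.1 i i' hne) h h'

end IsPartition

namespace AllocGraphEq

variable {xd : ℕ → ℝ} {k : ℕ} {Tl : Fin k → Finset ℕ} {E : Finset (ℝ × ℝ)}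

lemma exists_edge_below (hG : AllocGraphEq xd Tl E) {i : Fin k} {a b : ℕ} (ha : a ∈ Tl i)
    (hb : b ∈ Tl i) (hab : xd a < xd b) :
    ∃ c ∈ Tl i, xd a ≤ xd c ∧ xd c < xd b ∧ (xd c, xd b) ∈ E := by
  obtain ⟨c, hc, hmax⟩ := exists_max_image ((Tl i).filter fun c => xd a ≤ xd c ∧ xd c < xd b) xd
    ⟨a, mem_filter.mpr ⟨ha, le_rfl, hab⟩⟩
  obtain ⟨hci, hac, hcb⟩ := mem_filter.mp hc
  refine ⟨c, hci, hac, hcb, (hG _ _).mpr ⟨i, ⟨c, hci, rfl⟩, ⟨b, hb, rfl⟩, hcb, ?_⟩⟩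
  rintro ⟨d, hd, hcd, hdb⟩
  exact (hmax d (mem_filter.mpr ⟨hd, hac.trans hcd.le, hdb⟩)).not_gt hcd

theorem induction_on_types (hG : AllocGraphEq xd Tl E) {i : Fin k} {a : ℕ} (ha : a ∈ Tl i)
    {P : ℝ → Prop} (hbase : P (xd a))
    (hstep : ∀ c ∈ Tl i, ∀ d ∈ Tl i, xd a ≤ xd c → (xd c, xd d) ∈ E → P (xd c) → P (xd d)) :
    ∀ b ∈ Tl i, xd a ≤ xd b → P (xd b) := by
  suffices ∀ n b, ((Tl i).filter (xd · < xd b)).card = n → b ∈ Tl i → xd a ≤ xd b → P (xd b) from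
    fun b => this _ b rfl
  intro n
  induction n using Nat.strong_induction_on with
  | _ n ih =>
    rintro b rfl hb hab
    rcases hab.eq_or_lt with heq | hlt
    · rwa [← heq]
    obtain ⟨c, hc, hac, hcb, hedge⟩ := hG.exists_edge_below ha hb hlt
    refine hstep c hc b hb hac hedge (ih _ ?_ c rfl hc hac)
    exact card_lt_card ⟨monotone_filter_right _ fun _ _ h => h.trans hcb,
      fun h => (mem_filter.mp (h (mem_filter.mpr ⟨hc, hcb⟩))).2.false⟩

lemma mem_component_iff (hG : AllocGraphEq xd Tl E) {t : ℕ} {C : Fin t → Finset ℝ}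
    (hCedge : ∀ e ∈ E, ∀ j : Fin t, e.1 ∈ C j ↔ e.2 ∈ C j) {i : Fin k} {a b : ℕ}
    (ha : a ∈ Tl i) (hb : b ∈ Tl i) (j : Fin t) : xd a ∈ C j ↔ xd b ∈ C j := by
  wlog hab : xd a ≤ xd b generalizing a b
  · exact (this hb ha (le_of_not_ge hab)).symm
  exact hG.induction_on_types (P := fun y => xd a ∈ C j ↔ y ∈ C j) ha Iff.rfl
    (fun c _ d _ _ hcd hc => hc.trans (hCedge _ hcd j)) b hb hab

end AllocGraphEq

structure IsRealization (A : Finset ℕ) (xd : ℕ → ℝ) {k : ℕ} (q : Fin k → ℕ)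
    (Tl : Fin k → Finset ℕ) (E : Finset (ℝ × ℝ)) : Prop where
  isPartition : IsPartition A Tl
  feasible : Feasible q Tl
  envyFree : EnvyFree xd q Tl
  allocGraphEq : AllocGraphEq xd Tl E

namespace EnvyFree

variable {xd : ℕ → ℝ} {k : ℕ} {q : Fin k → ℕ} {Tl : Fin k → Finset ℕ}

lemma phi_le (hEF : EnvyFree xd q Tl) (hF : Feasible q Tl) {i i' : Fin k} (hii' : i ≠ i')
    {a b : ℕ} (ha : a ∈ Tl i) (ha' : a ∉ Tl i') (hb : b ∈ Tl i') :
    phi xd (Tl i) (xd a) ≤ phi xd ((Tl i').erase b ∪ {a}) (xd a) := by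
  have h := hEF i i' hii' a ha b hb
  rwa [taxiCost, taxiCost, if_pos (hF i),
    if_pos ((card_erase_union_singleton ha' hb).trans_le (hF i'))] at h

/-- An agent who is the lowest of her coalition pays `xd a / |Tl i|`; taking a seat in a
coalition lying entirely above her would cost `xd a / |Tl i'|`. -/
lemma card_le_of_lowest (hEF : EnvyFree xd q Tl) (hF : Feasible q Tl) {i i' : Fin k} {a b : ℕ}
    (ha : a ∈ Tl i) (hlow : ∀ c ∈ Tl i, xd a ≤ xd c) (hb : b ∈ Tl i')
    (hhigh : ∀ c ∈ Tl i', xd a < xd c) (hpos : 0 < xd a) : (Tl i').card ≤ (Tl i).card := by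
  have ha' : a ∉ Tl i' := fun h => (hhigh a h).false
  have h := hEF.phi_le hF (by rintro rfl; exact ha' ha) ha ha' hb
  rw [phi_eq_of_nT_eq fun r hr => nT_eq_card fun c hc => hr.2.trans (hlow c hc),
    phi_eq_of_nT_eq fun r hr => nT_eq_card fun c hc => ?_, card_erase_union_singleton ha' hb,
    ENNReal.mul_le_mul_iff_left (by simpa using hpos) ENNReal.ofReal_ne_top] at h
  · exact_mod_cast ENNReal.inv_le_inv.mp h
  · rcases mem_union.mp hc with hc | hc
    · exact hr.2.trans (hhigh c (mem_of_mem_erase hc)).le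
    · rw [mem_singleton.mp hc]
      exact hr.2

end EnvyFree

namespace IsRealization

variable {A : Finset ℕ} {xd : ℕ → ℝ} {k : ℕ} {q : Fin k → ℕ} {Tl : Fin k → Finset ℕ}
  {E : Finset (ℝ × ℝ)}

lemma phi_eq_of_xd_eq (hR : IsRealization A xd q Tl E) {i i' : Fin k} {a b : ℕ}
    (ha : a ∈ Tl i) (hb : b ∈ Tl i') (hab : xd a = xd b) :
    phi xd (Tl i) (xd a) = phi xd (Tl i') (xd a) := by
  have key : ∀ {i i' a b}, i ≠ i' → a ∈ Tl i → b ∈ Tl i' → xd a = xd b →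
      phi xd (Tl i) (xd a) ≤ phi xd (Tl i') (xd a) := by
    intro i i' a b hii' ha hb hab
    have ha' : a ∉ Tl i' := fun h => hii' (hR.isPartition.eq_of_mem ha h)
    refine (hR.envyFree.phi_le hR.feasible hii' ha ha' hb).trans_eq (phi_congr (fun r => ?_) _)
    have := nT_erase_union_singleton (xd := xd) ha' hb r
    rw [hab] at this
    omega
  rcases eq_or_ne i i' with rfl | hii'
  · rfl
  · exact le_antisymm (key hii' ha hb hab) (hab ▸ key hii'.symm hb ha hab.symm)

/-- An agent of type `w` outside the coalition realizing the edge `(p, w)` would strictly prefer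
the seat of its agent of type `p`. -/
lemma exists_forall_mem_of_edge (hR : IsRealization A xd q Tl E) (hpos : ∀ a ∈ A, 0 < xd a)
    {p w : ℝ} (hpw : (p, w) ∈ E) :
    ∃ i, (∃ u ∈ Tl i, xd u = p) ∧ ∀ a ∈ A, xd a = w → a ∈ Tl i := by
  obtain ⟨i₀, ⟨u, hu, rfl⟩, ⟨v, hv, rfl⟩, hlt, -⟩ := (hR.allocGraphEq _ _).mp hpw
  refine ⟨i₀, ⟨u, hu, rfl⟩, fun a haA hav => ?_⟩
  obtain ⟨i, hai⟩ := hR.isPartition.exists_mem haA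
  by_contra ha₀
  have hef := hR.envyFree.phi_le hR.feasible (by rintro rfl; exact ha₀ hai) hai ha₀ hu
  have hswap := hR.phi_eq_of_xd_eq hai hv hav
  have hlt' : phi xd ((Tl i₀).erase u ∪ {a}) (xd v) < phi xd (Tl i₀) (xd v) := by
    refine phi_lt_phi (hpos u (hR.isPartition.subset i₀ hu)).le hlt
      (fun r hr => one_le_nT hu hr.2) (fun r hr => ?_) (fun r hr => ?_)
    all_goals
      have := nT_erase_union_singleton (xd := xd) ha₀ hu r
      rw [if_pos (show r ≤ xd a by linarith [hr.2])] at this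
    · rw [if_pos hr.2] at this
      omega
    · rw [if_neg (not_le.mpr hr.1)] at this
      omega
  rw [hav] at hef hswap
  exact (hswap ▸ hef).not_gt hlt'

lemma exists_forall_mem_of_edges (hR : IsRealization A xd q Tl E) (hpos : ∀ a ∈ A, 0 < xd a)
    {p u v : ℝ} (hpu : (p, u) ∈ E) (huv : (u, v) ∈ E) :
    ∃ i, ∀ a ∈ A, (xd a = u ∨ xd a = v) → a ∈ Tl i := by
  obtain ⟨i₁, -, hu⟩ := hR.exists_forall_mem_of_edge hpos hpu
  obtain ⟨i₀, ⟨c, hc, hcu⟩, hv⟩ := hR.exists_forall_mem_of_edge hpos huv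
  obtain rfl := hR.isPartition.eq_of_mem hc (hu c (hR.isPartition.subset i₀ hc) hcu)
  exact ⟨i₀, fun a ha hav => hav.elim (hu a ha) (hv a ha)⟩

end IsRealization

structure IsComponentPartition (A : Finset ℕ) (xd : ℕ → ℝ) (E : Finset (ℝ × ℝ)) {t : ℕ}
    (C : Fin t → Finset ℝ) : Prop where
  disjoint : ∀ j j' : Fin t, j ≠ j' → Disjoint (C j) (C j')
  cover : ∀ y : ℝ, (∃ j, y ∈ C j) ↔ ∃ a ∈ A, xd a = y
  edge : ∀ e ∈ E, ∀ j : Fin t, e.1 ∈ C j ↔ e.2 ∈ C j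
  connected : ∀ j : Fin t, ∀ y ∈ C j, ∀ z ∈ C j,
    Relation.ReflTransGen (fun u v : ℝ => (u, v) ∈ E ∨ (v, u) ∈ E) y z

namespace IsRealization

variable {A : Finset ℕ} {xd : ℕ → ℝ} {k t : ℕ} {q : Fin k → ℕ} {Tl Tl' : Fin k → Finset ℕ}
  {E : Finset (ℝ × ℝ)} {C : Fin t → Finset ℝ} {lam lam' : Fin t → ℕ}

lemma min'_le_xd (hR : IsRealization A xd q Tl E) (hC : IsComponentPartition A xd E C)
    {j : Fin t} (hj : (C j).Nonempty) {i : Fin k} {a b : ℕ} (ha : a ∈ Tl i) (hb : b ∈ Tl i)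
    (haC : xd a ∈ C j) : (C j).min' hj ≤ xd b :=
  Finset.min'_le _ _ ((hR.allocGraphEq.mem_component_iff hC.edge ha hb j).mp haC)

lemma nT_eq_of_le_min' (hR : IsRealization A xd q Tl E) (hS : SizeVecEq xd Tl C lam)
    (hC : IsComponentPartition A xd E C) {j : Fin t} (hj : (C j).Nonempty) {i : Fin k} {a : ℕ}
    (ha : a ∈ Tl i) (haC : xd a ∈ C j) {r : ℝ} (hr : r ≤ (C j).min' hj) :
    nT xd (Tl i) r = lam j := by
  rw [nT_eq_card fun c hc => hr.trans (hR.min'_le_xd hC hj ha hc haC)]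
  exact hS j i ⟨a, ha⟩ ⟨a, ha, haC⟩

/-- Above the root of its component, a coalition is the whole branch of the star through it,
whatever the realization. -/
lemma mem_iff_mem_of_min'_lt (hR : IsRealization A xd q Tl E)
    (hR' : IsRealization A xd q Tl' E) (hstar : IsStarForest E) (hpos : ∀ a ∈ A, 0 < xd a)
    (hC : IsComponentPartition A xd E C) {j : Fin t} (hj : (C j).Nonempty) {i : Fin k}
    {a b : ℕ} (ha : a ∈ Tl i) (hb : b ∈ Tl i) (haC : xd a ∈ C j)
    (hra : (C j).min' hj < xd a) (hrb : (C j).min' hj < xd b) (i' : Fin k) :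
    a ∈ Tl' i' ↔ b ∈ Tl' i' := by
  wlog hab : xd a ≤ xd b generalizing a b
  · exact (this hb ha ((hR.allocGraphEq.mem_component_iff hC.edge ha hb j).mp haC) hrb hra
      (le_of_not_ge hab)).symm
  have hpred : ∀ c ∈ Tl i, xd a ≤ xd c → ∃ p, (p, xd c) ∈ E := fun c hc hac =>
    exists_edge_of_mem_of_ne_min' hstar hC.edge hC.connected hj
      ((hR.allocGraphEq.mem_component_iff hC.edge ha hc j).mp haC) (hra.trans_le hac).ne'
  obtain ⟨i₀, -, hi₀⟩ := hR'.exists_forall_mem_of_edge hpos (hpred a ha le_rfl).choose_spec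
  have hstep : ∀ c ∈ Tl i, ∀ d ∈ Tl i, xd a ≤ xd c → (xd c, xd d) ∈ E →
      (∀ e ∈ A, xd e = xd c → e ∈ Tl' i₀) → ∀ e ∈ A, xd e = xd d → e ∈ Tl' i₀ := by
    intro c hc d _ hac hcd hc₀
    obtain ⟨i₁, hi₁⟩ := hR'.exists_forall_mem_of_edges hpos (hpred c hc hac).choose_spec hcd
    have hcA := hR.isPartition.subset i hc
    obtain rfl := hR'.isPartition.eq_of_mem (hi₁ c hcA (.inl rfl)) (hc₀ c hcA rfl)
    exact fun e he hed => hi₁ e he (.inr hed)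
  have hmem : ∀ c ∈ Tl i, xd a ≤ xd c → c ∈ Tl' i₀ := fun c hc hac =>
    hR.allocGraphEq.induction_on_types (P := fun y => ∀ e ∈ A, xd e = y → e ∈ Tl' i₀) ha hi₀
      hstep c hc hac c (hR.isPartition.subset i hc) rfl
  have ha₀ := hmem a ha le_rfl
  have hb₀ := hmem b hb hab
  exact ⟨fun h => hR'.isPartition.eq_of_mem ha₀ h ▸ hb₀,
    fun h => hR'.isPartition.eq_of_mem hb₀ h ▸ ha₀⟩

lemma phi_le_phi_of_le (hR : IsRealization A xd q Tl E) (hS : SizeVecEq xd Tl C lam)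
    (hR' : IsRealization A xd q Tl' E) (hS' : SizeVecEq xd Tl' C lam') (hstar : IsStarForest E)
    (hpos : ∀ a ∈ A, 0 < xd a) (hC : IsComponentPartition A xd E C) {j : Fin t} {i i' : Fin k}
    {a : ℕ} (ha : a ∈ Tl i) (ha' : a ∈ Tl' i') (haC : xd a ∈ C j) (hle : lam' j ≤ lam j) :
    phi xd (Tl i) (xd a) ≤ phi xd (Tl' i') (xd a) := by
  have hj : (C j).Nonempty := ⟨_, haC⟩
  refine phi_mono fun r hr => ?_
  rcases le_or_gt r ((C j).min' hj) with hrρ | hρr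
  · rw [hR.nT_eq_of_le_min' hS hC hj ha haC hrρ, hR'.nT_eq_of_le_min' hS' hC hj ha' haC hrρ]
    exact hle
  · refine card_le_card fun b hb => ?_
    obtain ⟨hb, hrb⟩ := mem_filter.mp hb
    refine mem_filter.mpr ⟨(hR'.mem_iff_mem_of_min'_lt hR hstar hpos hC hj ha' hb haC
      (hρr.trans_le hr.2) (hρr.trans_le hrb) i).mp ha, hrb⟩

lemma size_le_of_min'_lt (hR : IsRealization A xd q Tl E) (hS : SizeVecEq xd Tl C lam)
    (hpos : ∀ a ∈ A, 0 < xd a) (hC : IsComponentPartition A xd E C) {j j' : Fin t}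
    (hj : (C j).Nonempty) (hj' : (C j').Nonempty) (hlt : (C j).min' hj < (C j').min' hj') :
    lam j' ≤ lam j := by
  obtain ⟨a, haA, hxa⟩ := (hC.cover _).mp ⟨j, min'_mem _ hj⟩
  obtain ⟨b, hbA, hxb⟩ := (hC.cover _).mp ⟨j', min'_mem _ hj'⟩
  obtain ⟨i, ha⟩ := hR.isPartition.exists_mem haA
  obtain ⟨i', hb⟩ := hR.isPartition.exists_mem hbA
  have haC : xd a ∈ C j := hxa ▸ min'_mem _ hj
  have hbC : xd b ∈ C j' := hxb ▸ min'_mem _ hj'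
  rw [← hS j i ⟨a, ha⟩ ⟨a, ha, haC⟩, ← hS j' i' ⟨b, hb⟩ ⟨b, hb, hbC⟩]
  exact hR.envyFree.card_le_of_lowest hR.feasible ha
    (fun c hc => hxa ▸ hR.min'_le_xd hC hj ha hc haC) hb
    (fun c hc => hxa ▸ hlt.trans_le (hR.min'_le_xd hC hj' hb hc hbC)) (hpos a haA)

end IsRealization

theorem forall_le_imp_le_or_forall_le_imp_le {ι β γ : Type*} [LinearOrder β] [LinearOrder γ]
    {S : Set ι} {ρ : ι → β} (hρ : S.InjOn ρ) {f g : ι → γ}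
    (hf : ∀ j ∈ S, ∀ j' ∈ S, ρ j < ρ j' → f j' ≤ f j)
    (hg : ∀ j ∈ S, ∀ j' ∈ S, ρ j < ρ j' → g j' ≤ g j) (c : γ) :
    (∀ j ∈ S, c ≤ g j → c ≤ f j) ∨ ∀ j ∈ S, c ≤ f j → c ≤ g j := by
  by_contra! h
  obtain ⟨⟨j, hj, hgj, hfj⟩, ⟨j', hj', hfj', hgj'⟩⟩ := h
  rcases lt_trichotomy (ρ j) (ρ j') with hlt | heq | hgt
  · exact (hfj'.trans (hf j hj j' hj' hlt)).not_gt hfj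
  · rw [hρ hj hj' heq] at hfj
    exact hfj'.not_gt hfj
  · exact (hgj.trans (hg j' hj' j hj hgt)).not_gt hgj'

lemma exists_realization_of_le_max {A : Finset ℕ} {xd : ℕ → ℝ} {k t : ℕ} {q : Fin k → ℕ}
    {Tl Tl' : Fin k → Finset ℕ} {E : Finset (ℝ × ℝ)} {C : Fin t → Finset ℝ}
    {lam lam' : Fin t → ℕ} (hR : IsRealization A xd q Tl E) (hS : SizeVecEq xd Tl C lam)
    (hR' : IsRealization A xd q Tl' E) (hS' : SizeVecEq xd Tl' C lam')
    (hpos : ∀ a ∈ A, 0 < xd a) (hC : IsComponentPartition A xd E C) (c : ℕ) :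
    ∃ Tx lx, IsRealization A xd q Tx E ∧ SizeVecEq xd Tx C lx ∧
      (∀ j, lx j ≤ max (lam j) (lam' j)) ∧
      ∀ j, (C j).Nonempty → c ≤ max (lam j) (lam' j) → c ≤ lx j := by
  have hinj : {j | (C j).Nonempty}.InjOn fun j => (C j).min := by
    intro j hj j' hj' h
    simp only [← coe_min' hj, ← coe_min' hj', WithTop.coe_inj] at h
    by_contra hne
    exact disjoint_left.mp (hC.disjoint j j' hne) (min'_mem _ hj) (h ▸ min'_mem _ hj')
  rcases forall_le_imp_le_or_forall_le_imp_le hinj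
    (fun j hj j' hj' hlt => hR.size_le_of_min'_lt hS hpos hC hj hj'
      (by simpa only [← coe_min' hj, ← coe_min' hj', WithTop.coe_lt_coe] using hlt))
    (fun j hj j' hj' hlt => hR'.size_le_of_min'_lt hS' hpos hC hj hj'
      (by simpa only [← coe_min' hj, ← coe_min' hj', WithTop.coe_lt_coe] using hlt)) c
    with h | h
  · exact ⟨Tl, lam, hR, hS, fun j => le_max_left _ _, fun j hj hc =>
      (le_max_iff.mp hc).elim id (h j hj)⟩
  · exact ⟨Tl', lam', hR', hS', fun j => le_max_right _ _, fun j hj hc =>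
      (le_max_iff.mp hc).elim (h j hj) id⟩

noncomputable def componentCoalitions (xd : ℕ → ℝ) {k t : ℕ} (Tl : Fin k → Finset ℕ)
    (C : Fin t → Finset ℝ) (j : Fin t) : Finset (Finset ℕ) :=
  (univ.image Tl).filter fun T => ∃ a ∈ T, xd a ∈ C j

section ComponentCoalitions

variable {A : Finset ℕ} {xd : ℕ → ℝ} {k t : ℕ} {q : Fin k → ℕ} {Tl Tl' : Fin k → Finset ℕ}
  {E : Finset (ℝ × ℝ)} {C : Fin t → Finset ℝ} {lam lam' : Fin t → ℕ}

lemma mem_componentCoalitions {j : Fin t} {T : Finset ℕ} :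
    T ∈ componentCoalitions xd Tl C j ↔ (∃ i, Tl i = T) ∧ ∃ a ∈ T, xd a ∈ C j := by
  simp [componentCoalitions]

lemma card_of_mem_componentCoalitions (hS : SizeVecEq xd Tl C lam) {j : Fin t} {T : Finset ℕ}
    (hT : T ∈ componentCoalitions xd Tl C j) : T.card = lam j := by
  obtain ⟨⟨i, rfl⟩, a, ha, haC⟩ := mem_componentCoalitions.mp hT
  exact hS j i ⟨a, ha⟩ ⟨a, ha, haC⟩

lemma AllocGraphEq.mem_of_mem_componentCoalitions (hG : AllocGraphEq xd Tl E)
    (hC : IsComponentPartition A xd E C) {j : Fin t} {T : Finset ℕ}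
    (hT : T ∈ componentCoalitions xd Tl C j) {a : ℕ} (ha : a ∈ T) : xd a ∈ C j := by
  obtain ⟨⟨i, rfl⟩, b, hb, hbC⟩ := mem_componentCoalitions.mp hT
  exact (hG.mem_component_iff hC.edge hb ha j).mp hbC

lemma AllocGraphEq.disjoint_componentCoalitions (hG : AllocGraphEq xd Tl E)
    (hC : IsComponentPartition A xd E C) {j j' : Fin t}
    (hjj' : j ≠ j') : Disjoint (componentCoalitions xd Tl' C j) (componentCoalitions xd Tl C j') :=
  disjoint_left.mpr fun T hT hT' => by
    obtain ⟨-, a, ha, haC⟩ := mem_componentCoalitions.mp hT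
    exact disjoint_left.mp (hC.disjoint j j' hjj') haC
      (hG.mem_of_mem_componentCoalitions hC hT' ha)

lemma IsRealization.card_componentCoalitions_mul (hR : IsRealization A xd q Tl E)
    (hS : SizeVecEq xd Tl C lam) (hC : IsComponentPartition A xd E C) (j : Fin t) :
    (componentCoalitions xd Tl C j).card * lam j = (A.filter fun a => xd a ∈ C j).card := by
  have hunion : A.filter (fun a => xd a ∈ C j) = (componentCoalitions xd Tl C j).biUnion id := by
    ext a
    simp only [mem_filter, mem_biUnion, id]
    constructor
    · rintro ⟨haA, haC⟩
      obtain ⟨i, ha⟩ := hR.isPartition.exists_mem haA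
      exact ⟨Tl i, mem_componentCoalitions.mpr ⟨⟨i, rfl⟩, a, ha, haC⟩, ha⟩
    · rintro ⟨T, hT, ha⟩
      obtain ⟨⟨i, rfl⟩, -⟩ := mem_componentCoalitions.mp hT
      exact ⟨hR.isPartition.subset i ha, hR.allocGraphEq.mem_of_mem_componentCoalitions hC hT ha⟩
  rw [hunion, card_biUnion, sum_congr rfl fun T hT =>
    (card_of_mem_componentCoalitions hS hT : (id T).card = lam j), sum_const, smul_eq_mul]
  intro T hT T' hT' hne
  obtain ⟨⟨i, rfl⟩, -⟩ := mem_componentCoalitions.mp hT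
  obtain ⟨⟨i', rfl⟩, -⟩ := mem_componentCoalitions.mp hT'
  exact hR.isPartition.1 i i' fun h => hne (h ▸ rfl)

lemma IsRealization.card_componentCoalitions_le (hR : IsRealization A xd q Tl E)
    (hS : SizeVecEq xd Tl C lam) (hR' : IsRealization A xd q Tl' E) (hS' : SizeVecEq xd Tl' C lam')
    (hC : IsComponentPartition A xd E C) {j : Fin t} (hle : lam' j ≤ lam j) :
    (componentCoalitions xd Tl C j).card ≤ (componentCoalitions xd Tl' C j).card := by
  rcases (componentCoalitions xd Tl C j).eq_empty_or_nonempty with hempty | ⟨T, hT⟩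
  · simp [hempty]
  obtain ⟨⟨i, rfl⟩, a, ha, haC⟩ := mem_componentCoalitions.mp hT
  obtain ⟨i', ha'⟩ := hR'.isPartition.exists_mem (hR.isPartition.subset i ha)
  have hpos : 0 < lam' j := hS' j i' ⟨a, ha'⟩ ⟨a, ha', haC⟩ ▸ card_pos.mpr ⟨a, ha'⟩
  refine le_of_mul_le_mul_right ?_ hpos
  rw [hR'.card_componentCoalitions_mul hS' hC, ← hR.card_componentCoalitions_mul hS hC]
  exact Nat.mul_le_mul_left _ hle

lemma IsRealization.sum_card_filter_componentCoalitions_le {A : Finset ℕ} {xd : ℕ → ℝ}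
    {k t : ℕ} {q : Fin k → ℕ} {Tl : Fin k → Finset ℕ} {E : Finset (ℝ × ℝ)}
    {C : Fin t → Finset ℝ} (hR : IsRealization A xd q Tl E) (hC : IsComponentPartition A xd E C)
    (c : ℕ) :
    ∑ j, ((componentCoalitions xd Tl C j).filter fun T => c ≤ T.card).card
      ≤ (univ.filter fun i => c ≤ q i).card := by
  rw [← card_biUnion fun j _ j' _ hjj' => disjoint_filter_filter
    (hR.allocGraphEq.disjoint_componentCoalitions hC hjj')]
  calc _ ≤ ((univ.filter fun i => c ≤ (Tl i).card).image Tl).card := by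
        refine card_le_card fun T hT => ?_
        obtain ⟨j, -, hT⟩ := mem_biUnion.mp hT
        obtain ⟨hT, hcT⟩ := mem_filter.mp hT
        obtain ⟨⟨i, rfl⟩, -⟩ := mem_componentCoalitions.mp hT
        exact mem_image_of_mem Tl (mem_filter.mpr ⟨mem_univ i, hcT⟩)
    _ ≤ (univ.filter fun i => c ≤ (Tl i).card).card := card_image_le
    _ ≤ (univ.filter fun i => c ≤ q i).card :=
        card_le_card (monotone_filter_right _ fun i _ h => h.trans (hR.feasible i))

noncomputable def mixedCoalitions (xd : ℕ → ℝ) {k t : ℕ} (Tl Tl' : Fin k → Finset ℕ)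
    (C : Fin t → Finset ℝ) (lam lam' : Fin t → ℕ) : Finset (Finset ℕ) :=
  univ.biUnion fun j =>
    if lam' j ≤ lam j then componentCoalitions xd Tl C j else componentCoalitions xd Tl' C j

section MixedCoalitions

variable {A : Finset ℕ} {xd : ℕ → ℝ} {k t : ℕ} {q : Fin k → ℕ} {Tl Tl' : Fin k → Finset ℕ}
  {E : Finset (ℝ × ℝ)} {C : Fin t → Finset ℝ} {lam lam' : Fin t → ℕ}

lemma exists_realization_max (hR : IsRealization A xd q Tl E) (hS : SizeVecEq xd Tl C lam)
    (hR' : IsRealization A xd q Tl' E) (hS' : SizeVecEq xd Tl' C lam') (j : Fin t) :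
    ∃ Tw lw, IsRealization A xd q Tw E ∧ SizeVecEq xd Tw C lw ∧
      (∀ j', lw j' ≤ max (lam j') (lam' j')) ∧ lw j = max (lam j) (lam' j) ∧
      (if lam' j ≤ lam j then componentCoalitions xd Tl C j else componentCoalitions xd Tl' C j)
        = componentCoalitions xd Tw C j := by
  split_ifs with h
  · exact ⟨Tl, lam, hR, hS, fun _ => le_max_left _ _, (max_eq_left h).symm, rfl⟩
  · exact ⟨Tl', lam', hR', hS', fun _ => le_max_right _ _, (max_eq_right (le_of_not_ge h)).symm,
      rfl⟩

lemma exists_of_mem_mixedCoalitions (hR : IsRealization A xd q Tl E) (hS : SizeVecEq xd Tl C lam)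
    (hR' : IsRealization A xd q Tl' E) (hS' : SizeVecEq xd Tl' C lam') {T : Finset ℕ}
    (hT : T ∈ mixedCoalitions xd Tl Tl' C lam lam') :
    ∃ j Tw lw, IsRealization A xd q Tw E ∧ SizeVecEq xd Tw C lw ∧
      (∀ j', lw j' ≤ max (lam j') (lam' j')) ∧ lw j = max (lam j) (lam' j) ∧
      T ∈ componentCoalitions xd Tw C j := by
  obtain ⟨j, -, hT⟩ := mem_biUnion.mp hT
  obtain ⟨Tw, lw, hRw, hSw, hle, hlw, heq⟩ := exists_realization_max hR hS hR' hS' j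
  exact ⟨j, Tw, lw, hRw, hSw, hle, hlw, heq ▸ hT⟩

lemma exists_componentCoalitions_subset_mixedCoalitions (hR : IsRealization A xd q Tl E)
    (hS : SizeVecEq xd Tl C lam) (hR' : IsRealization A xd q Tl' E)
    (hS' : SizeVecEq xd Tl' C lam') (j : Fin t) :
    ∃ Tw, IsRealization A xd q Tw E ∧
      componentCoalitions xd Tw C j ⊆ mixedCoalitions xd Tl Tl' C lam lam' := by
  obtain ⟨Tw, -, hRw, -, -, -, heq⟩ := exists_realization_max hR hS hR' hS' j
  exact ⟨Tw, hRw, fun T hT => mem_biUnion.mpr ⟨j, mem_univ j, heq ▸ hT⟩⟩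

lemma card_filter_mixedCoalitions_le (hR : IsRealization A xd q Tl E) (hS : SizeVecEq xd Tl C lam)
    (hR' : IsRealization A xd q Tl' E) (hS' : SizeVecEq xd Tl' C lam')
    (hpos : ∀ a ∈ A, 0 < xd a) (hC : IsComponentPartition A xd E C) (c : ℕ) :
    ((mixedCoalitions xd Tl Tl' C lam lam').filter fun T => c ≤ T.card).card
      ≤ (univ.filter fun i => c ≤ q i).card := by
  obtain ⟨Tx, lx, hRx, hSx, hlx, hclx⟩ := exists_realization_of_le_max hR hS hR' hS' hpos hC c
  rw [mixedCoalitions, filter_biUnion, card_biUnion]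
  · refine (sum_le_sum fun j _ => ?_).trans (hRx.sum_card_filter_componentCoalitions_le hC c)
    obtain ⟨Tw, lw, hRw, hSw, -, hlw, heq⟩ := exists_realization_max hR hS hR' hS' j
    rw [heq]
    by_cases hc : c ≤ lw j
    · rcases (componentCoalitions xd Tw C j).eq_empty_or_nonempty with hempty | ⟨T, hT⟩
      · simp [hempty]
      obtain ⟨-, a, -, haC⟩ := mem_componentCoalitions.mp hT
      have hcx : c ≤ lx j := hclx j ⟨_, haC⟩ (hlw ▸ hc)
      rw [filter_true_of_mem fun T hT => (card_of_mem_componentCoalitions hSw hT).symm ▸ hc,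
        filter_true_of_mem fun T hT => (card_of_mem_componentCoalitions hSx hT).symm ▸ hcx]
      exact hRw.card_componentCoalitions_le hSw hRx hSx hC (hlw ▸ hlx j)
    · rw [filter_false_of_mem fun T hT => (card_of_mem_componentCoalitions hSw hT).symm ▸ hc,
        card_empty]
      exact Nat.zero_le _
  · intro j _ j' _ hjj'
    obtain ⟨Tw, -, -, -, -, -, heq⟩ := exists_realization_max hR hS hR' hS' j
    obtain ⟨Tw', -, hRw', -, -, -, heq'⟩ := exists_realization_max hR hS hR' hS' j'
    simp only [Function.onFun, heq, heq']
    exact disjoint_filter_filter (hRw'.allocGraphEq.disjoint_componentCoalitions hC hjj')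

lemma pairwiseDisjoint_mixedCoalitions (hR : IsRealization A xd q Tl E)
    (hS : SizeVecEq xd Tl C lam) (hR' : IsRealization A xd q Tl' E)
    (hS' : SizeVecEq xd Tl' C lam') (hC : IsComponentPartition A xd E C) :
    (mixedCoalitions xd Tl Tl' C lam lam' : Set (Finset ℕ)).PairwiseDisjoint id := by
  intro T hT T' hT' hne
  obtain ⟨j, -, hT⟩ := mem_biUnion.mp hT
  obtain ⟨j', -, hT'⟩ := mem_biUnion.mp hT'
  obtain ⟨Tw, -, hRw, -, -, -, heq⟩ := exists_realization_max hR hS hR' hS' j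
  obtain ⟨Tw', -, hRw', -, -, -, heq'⟩ := exists_realization_max hR hS hR' hS' j'
  rw [heq] at hT
  rw [heq'] at hT'
  rcases eq_or_ne j j' with rfl | hjj'
  · rw [← heq', heq] at hT'
    obtain ⟨⟨i, rfl⟩, -⟩ := mem_componentCoalitions.mp hT
    obtain ⟨⟨i', rfl⟩, -⟩ := mem_componentCoalitions.mp hT'
    exact hRw.isPartition.1 i i' fun h => hne (h ▸ rfl)
  · exact disjoint_left.mpr fun a ha ha' => disjoint_left.mp (hC.disjoint j j' hjj')
      (hRw.allocGraphEq.mem_of_mem_componentCoalitions hC hT ha)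
      (hRw'.allocGraphEq.mem_of_mem_componentCoalitions hC hT' ha')

lemma subset_of_mem_mixedCoalitions (hR : IsRealization A xd q Tl E)
    (hS : SizeVecEq xd Tl C lam) (hR' : IsRealization A xd q Tl' E)
    (hS' : SizeVecEq xd Tl' C lam') {T : Finset ℕ}
    (hT : T ∈ mixedCoalitions xd Tl Tl' C lam lam') : T ⊆ A := by
  obtain ⟨_, Tw, _, hRw, -, -, -, hTw⟩ := exists_of_mem_mixedCoalitions hR hS hR' hS' hT
  obtain ⟨⟨i, rfl⟩, -⟩ := mem_componentCoalitions.mp hTw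
  exact hRw.isPartition.subset i

lemma exists_mem_mixedCoalitions (hR : IsRealization A xd q Tl E)
    (hS : SizeVecEq xd Tl C lam) (hR' : IsRealization A xd q Tl' E)
    (hS' : SizeVecEq xd Tl' C lam') (hC : IsComponentPartition A xd E C) {a : ℕ} (ha : a ∈ A) :
    ∃ T ∈ mixedCoalitions xd Tl Tl' C lam lam', a ∈ T := by
  obtain ⟨j, haC⟩ := (hC.cover (xd a)).mpr ⟨a, ha, rfl⟩
  obtain ⟨Tw, hRw, hsub⟩ := exists_componentCoalitions_subset_mixedCoalitions hR hS hR' hS' j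
  obtain ⟨i, hai⟩ := hRw.isPartition.exists_mem ha
  exact ⟨Tw i, hsub (mem_componentCoalitions.mpr ⟨⟨i, rfl⟩, a, hai, haC⟩), hai⟩

end MixedCoalitions

theorem exists_assignment {α ι : Type*} [Fintype ι] [DecidableEq ι] (M : Finset (Finset α))
    (q : ι → ℕ)
    (hM : ∀ c, (M.filter fun T => c ≤ T.card).card ≤ (univ.filter fun i => c ≤ q i).card) :
    ∃ Tl : ι → Finset α, (∀ i, Tl i = ∅ ∨ Tl i ∈ M) ∧ (∀ T ∈ M, ∃ i, Tl i = T) ∧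
      (∀ i i', i ≠ i' → Tl i = Tl i' → Tl i = ∅) ∧ ∀ i, (Tl i).card ≤ q i := by
  obtain ⟨f, hf, hfq⟩ := (all_card_le_biUnion_card_iff_exists_injective
    fun T : M => univ.filter fun i => (T : Finset α).card ≤ q i).mp fun s => by
      rcases s.eq_empty_or_nonempty with rfl | hs
      · simp
      obtain ⟨T₀, hT₀, hmin⟩ := s.exists_min_image (fun T => (T : Finset α).card) hs
      calc s.card = (s.map (Function.Embedding.subtype _)).card := (card_map _).symm
        _ ≤ (M.filter fun T => (T₀ : Finset α).card ≤ T.card).card := card_le_card fun T hT => by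
            obtain ⟨T', hT', rfl⟩ := mem_map.mp hT
            exact mem_filter.mpr ⟨T'.2, hmin T' hT'⟩
        _ ≤ _ := hM _
        _ ≤ _ := card_le_card fun i hi => mem_biUnion.mpr ⟨T₀, hT₀, hi⟩
  classical
  refine ⟨fun i => if h : ∃ T, f T = i then h.choose else ∅, fun i => ?_, fun T hT => ?_,
    fun i i' hii' => ?_, fun i => ?_⟩
  · dsimp only
    split_ifs with h
    exacts [.inr h.choose.2, .inl rfl]
  · have h : ∃ T', f T' = f ⟨T, hT⟩ := ⟨_, rfl⟩
    exact ⟨f ⟨T, hT⟩, by dsimp only; rw [dif_pos h, hf h.choose_spec]⟩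
  · dsimp only
    split_ifs with h h'
    · intro heq
      exact absurd (h.choose_spec.symm.trans ((congrArg f (Subtype.ext heq)).trans h'.choose_spec))
        hii'
    all_goals simp
  · dsimp only
    split_ifs with h
    · exact (mem_filter.mp (hfq h.choose)).2.trans_eq (congrArg q h.choose_spec)
    · simp

lemma isPartition_of_assignment {A : Finset ℕ} {k : ℕ} {M : Finset (Finset ℕ)}
    (hdisj : (M : Set (Finset ℕ)).PairwiseDisjoint id) (hsub : ∀ T ∈ M, T ⊆ A)
    (hcover : ∀ a ∈ A, ∃ T ∈ M, a ∈ T) {Tl : Fin k → Finset ℕ} (hmem : ∀ i, Tl i = ∅ ∨ Tl i ∈ M)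
    (hsurj : ∀ T ∈ M, ∃ i, Tl i = T) (hinj : ∀ i i', i ≠ i' → Tl i = Tl i' → Tl i = ∅) :
    IsPartition A Tl := by
  refine ⟨fun i i' hii' => ?_, subset_antisymm (biUnion_subset.mpr fun i _ => ?_) fun a ha => ?_⟩
  · by_cases heq : Tl i = Tl i'
    · rw [hinj i i' hii' heq]
      exact disjoint_empty_left _
    rcases hmem i with h | h
    · simp [h]
    rcases hmem i' with h' | h'
    · simp [h']
    exact hdisj h h' heq
  · rcases hmem i with h | h
    · simp [h]
    · exact hsub _ h
  · obtain ⟨T, hT, haT⟩ := hcover a ha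
    obtain ⟨i, rfl⟩ := hsurj T hT
    exact mem_biUnion.mpr ⟨i, mem_univ i, haT⟩

section Assignment

variable {A : Finset ℕ} {xd : ℕ → ℝ} {k t : ℕ} {q : Fin k → ℕ} {Tl Tl' Tl'' : Fin k → Finset ℕ}
  {E : Finset (ℝ × ℝ)} {C : Fin t → Finset ℝ} {lam lam' : Fin t → ℕ}

/-- An agent pays no more in the mixed allocation than in the realization whose seat she would
take, since her coalition comes from the realization with the larger size in her component. -/
lemma envyFree_of_assignment (hR : IsRealization A xd q Tl E) (hS : SizeVecEq xd Tl C lam)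
    (hR' : IsRealization A xd q Tl' E) (hS' : SizeVecEq xd Tl' C lam') (hstar : IsStarForest E)
    (hpos : ∀ a ∈ A, 0 < xd a) (hC : IsComponentPartition A xd E C)
    (hP : IsPartition A Tl'') (hF : Feasible q Tl'')
    (hmem : ∀ i, Tl'' i = ∅ ∨ Tl'' i ∈ mixedCoalitions xd Tl Tl' C lam lam') :
    EnvyFree xd q Tl'' := by
  intro i i' hii' a ha b hb
  have ha' : a ∉ Tl'' i' := disjoint_left.mp (hP.1 i i' hii') ha
  rw [taxiCost, taxiCost, if_pos (hF i),
    if_pos ((card_erase_union_singleton ha' hb).trans_le (hF i'))]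
  obtain ⟨j, Tw, lw, hRw, hSw, -, hlw, hT⟩ := exists_of_mem_mixedCoalitions hR hS hR' hS'
    ((hmem i).resolve_left (ne_empty_of_mem ha))
  obtain ⟨_, Tw', lw', hRw', hSw', hle', -, hT'⟩ := exists_of_mem_mixedCoalitions hR hS hR' hS'
    ((hmem i').resolve_left (ne_empty_of_mem hb))
  have haC := hRw.allocGraphEq.mem_of_mem_componentCoalitions hC hT ha
  obtain ⟨⟨iw, hiw⟩, -⟩ := mem_componentCoalitions.mp hT
  obtain ⟨⟨iw', hiw'⟩, -⟩ := mem_componentCoalitions.mp hT'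
  obtain ⟨i₂, ha₂⟩ := hRw'.isPartition.exists_mem (hP.subset i ha)
  rw [← hiw] at ha ⊢
  rw [← hiw'] at ha' hb ⊢
  calc phi xd (Tw iw) (xd a) ≤ phi xd (Tw' i₂) (xd a) :=
        hRw.phi_le_phi_of_le hSw hRw' hSw' hstar hpos hC ha ha₂ haC (hlw ▸ hle' j)
    _ ≤ _ := hRw'.envyFree.phi_le hRw'.feasible (by rintro rfl; exact ha' ha₂) ha₂ ha' hb

lemma allocGraphEq_of_assignment (hR : IsRealization A xd q Tl E) (hS : SizeVecEq xd Tl C lam)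
    (hR' : IsRealization A xd q Tl' E) (hS' : SizeVecEq xd Tl' C lam')
    (hC : IsComponentPartition A xd E C)
    (hmem : ∀ i, Tl'' i = ∅ ∨ Tl'' i ∈ mixedCoalitions xd Tl Tl' C lam lam')
    (hsurj : ∀ T ∈ mixedCoalitions xd Tl Tl' C lam lam', ∃ i, Tl'' i = T) :
    AllocGraphEq xd Tl'' E := by
  intro y z
  constructor
  · intro hyz
    obtain ⟨i, ⟨u, hu, rfl⟩, -⟩ := (hR.allocGraphEq _ _).mp hyz
    obtain ⟨j, hj⟩ := (hC.cover (xd u)).mpr ⟨u, hR.isPartition.subset i hu, rfl⟩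
    obtain ⟨Tw, hRw, hsub⟩ := exists_componentCoalitions_subset_mixedCoalitions hR hS hR' hS' j
    obtain ⟨iw, ⟨u', hu', hu'y⟩, hedge⟩ := (hRw.allocGraphEq _ _).mp hyz
    obtain ⟨i'', hi''⟩ :=
      hsurj _ (hsub (mem_componentCoalitions.mpr ⟨⟨iw, rfl⟩, u', hu', hu'y ▸ hj⟩))
    exact ⟨i'', hi'' ▸ ⟨⟨u', hu', hu'y⟩, hedge⟩⟩
  · rintro ⟨i, ⟨u, hu, hu'⟩, hedge⟩
    obtain ⟨_, Tw, _, hRw, -, -, -, hT⟩ := exists_of_mem_mixedCoalitions hR hS hR' hS'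
      ((hmem i).resolve_left (ne_empty_of_mem hu))
    obtain ⟨⟨iw, hiw⟩, -⟩ := mem_componentCoalitions.mp hT
    exact (hRw.allocGraphEq _ _).mpr ⟨iw, hiw ▸ ⟨⟨u, hu, hu'⟩, hedge⟩⟩

lemma sizeVecEq_of_assignment (hR : IsRealization A xd q Tl E) (hS : SizeVecEq xd Tl C lam)
    (hR' : IsRealization A xd q Tl' E) (hS' : SizeVecEq xd Tl' C lam')
    (hC : IsComponentPartition A xd E C)
    (hmem : ∀ i, Tl'' i = ∅ ∨ Tl'' i ∈ mixedCoalitions xd Tl Tl' C lam lam') :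
    SizeVecEq xd Tl'' C fun j => max (lam j) (lam' j) := by
  rintro j i ⟨b, hb⟩ ⟨a, ha, haC⟩
  obtain ⟨j', Tw, lw, hRw, hSw, -, hlw, hT⟩ := exists_of_mem_mixedCoalitions hR hS hR' hS'
    ((hmem i).resolve_left (ne_empty_of_mem hb))
  obtain rfl : j' = j := by
    by_contra hne
    exact disjoint_left.mp (hC.disjoint j' j hne)
      (hRw.allocGraphEq.mem_of_mem_componentCoalitions hC hT ha) haC
  rw [card_of_mem_componentCoalitions hSw hT, hlw]

end Assignment

theorem stmt16_general (A : Finset ℕ) (xd : ℕ → ℝ) (hposx : ∀ a ∈ A, 0 < xd a)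
    (k t : ℕ) (q : Fin k → ℕ)
    (E : Finset (ℝ × ℝ)) (C : Fin t → Finset ℝ)
    (hstar : IsStarForest E)
    (hCdisj : ∀ j j' : Fin t, j ≠ j' → Disjoint (C j) (C j'))
    (hCcover : ∀ y : ℝ, (∃ j, y ∈ C j) ↔ ∃ a ∈ A, xd a = y)
    (hCedge : ∀ e ∈ E, ∀ j : Fin t, e.1 ∈ C j ↔ e.2 ∈ C j)
    (hCconn : ∀ j : Fin t, ∀ y ∈ C j, ∀ z ∈ C j,
      Relation.ReflTransGen (fun u v : ℝ => (u, v) ∈ E ∨ (v, u) ∈ E) y z)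
    (lam lam' : Fin t → ℕ)
    (h1 : MemLambdaG A xd q E C lam) (h2 : MemLambdaG A xd q E C lam') :
    MemLambdaG A xd q E C (fun j => max (lam j) (lam' j)) := by
  obtain ⟨Tl, hP, hF, hEF, hG, hS⟩ := h1
  obtain ⟨Tl', hP', hF', hEF', hG', hS'⟩ := h2
  have hR : IsRealization A xd q Tl E := ⟨hP, hF, hEF, hG⟩
  have hR' : IsRealization A xd q Tl' E := ⟨hP', hF', hEF', hG'⟩
  have hC : IsComponentPartition A xd E C := ⟨hCdisj, hCcover, hCedge, hCconn⟩
  obtain ⟨Tl'', hmem, hsurj, hinj, hF''⟩ := exists_assignment _ q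
    (card_filter_mixedCoalitions_le hR hS hR' hS' hposx hC)
  have hP'' : IsPartition A Tl'' := isPartition_of_assignment
    (pairwiseDisjoint_mixedCoalitions hR hS hR' hS' hC)
    (fun _ => subset_of_mem_mixedCoalitions hR hS hR' hS')
    (fun _ => exists_mem_mixedCoalitions hR hS hR' hS' hC) hmem hsurj hinj
  exact ⟨Tl'', hP'', hF'', envyFree_of_assignment hR hS hR' hS' hstar hposx hC hP'' hF'' hmem,
    allocGraphEq_of_assignment hR hS hR' hS' hC hmem hsurj,
    sizeVecEq_of_assignment hR hS hR' hS' hC hmem⟩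

/-- Semilattice property: for a fixed star-forest `G = E` (with
connected components `C`), the set `Λ_G` of size vectors of envy-free feasible
allocations realizing `G` is closed under componentwise maximum. -/
theorem stmt16 (A : Finset ℕ) (xd : ℕ → ℝ) (hposx : ∀ a ∈ A, 0 < xd a)
    (k t : ℕ) (q : Fin k → ℕ) (hq : ∀ i j : Fin k, i ≤ j → q j ≤ q i)
    (E : Finset (ℝ × ℝ)) (C : Fin t → Finset ℝ)
    (hstar : IsStarForest E)
    (hCdisj : ∀ j j' : Fin t, j ≠ j' → Disjoint (C j) (C j'))
    (hCcover : ∀ y : ℝ, (∃ j, y ∈ C j) ↔ ∃ a ∈ A, xd a = y)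
    (hCedge : ∀ e ∈ E, ∀ j : Fin t, e.1 ∈ C j ↔ e.2 ∈ C j)
    (hCconn : ∀ j : Fin t, ∀ y ∈ C j, ∀ z ∈ C j,
      Relation.ReflTransGen (fun u v : ℝ => (u, v) ∈ E ∨ (v, u) ∈ E) y z)
    (lam lam' : Fin t → ℕ)
    (hlam : ∀ j, 0 < lam j) (hlam' : ∀ j, 0 < lam' j)
    (h1 : MemLambdaG A xd q E C lam) (h2 : MemLambdaG A xd q E C lam') :
    MemLambdaG A xd q E C (fun j => max (lam j) (lam' j)) :=
  stmt16_general A xd hposx k t q E C hstar hCdisj hCcover hCedge hCconn lam lam' h1 h2
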